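/- Let x be real and n ≥ 1, P ≥ 1 integers with l_n = (3·2^{n-1}-1)/2. Then Σ_{l=2^{n-1}}^{2^n-1} |1/(x-(2l-1)πi)| · |2(l-l_n)πi/(x-(2l_n-1)πi)|^P ≤ (1/(2π))·(1/3^P). -/

import Mathlib

/-!
Write `m = 2^(n-1)`. For `m ≤ l < 2m` the pole distance is `|x - (2l-1)πi| ≥ (2m-1)π`, and the
multipole ratio is `|2l + 1 - 3m| / (3m - 2) ≤ 1/3`. Bounding every factor of the ratio by `1/3`
is too crude for `m = 2`, so one factor is kept; the sum then reduces to
`∑_{i<m} |2i + 1 - m| ≤ m²/2`, and `6 · (that sum) ≤ (2m-1)(3m-2)` gives the constant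
`1/(2π)`.
-/

open Complex Finset Real

lemma abs_le_norm_ofReal_sub_mul_I (x t : ℝ) : |t| ≤ ‖(x : ℂ) - t * I‖ := by
  simpa using abs_im_le_norm ((x : ℂ) - t * I)

lemma norm_one_div_ofReal_sub_mul_I_le (x : ℝ) {t : ℝ} (ht : 0 < t) :
    ‖1 / ((x : ℂ) - t * I)‖ ≤ 1 / t := by
  rw [norm_div, norm_one]
  exact one_div_le_one_div_of_le ht ((le_abs_self t).trans (abs_le_norm_ofReal_sub_mul_I x t))

lemma norm_mul_I_div_ofReal_sub_mul_I_le (x s : ℝ) {t : ℝ} (ht : 0 < t) :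
    ‖(s : ℂ) * I / ((x : ℂ) - t * I)‖ ≤ |s| / t := by
  rw [norm_div, norm_mul, norm_I, mul_one, norm_real, Real.norm_eq_abs]
  exact div_le_div_of_nonneg_left (abs_nonneg s) ht
    ((le_abs_self t).trans (abs_le_norm_ofReal_sub_mul_I x t))

lemma pow_le_pow_pred_mul {r c : ℝ} (hr : 0 ≤ r) (hrc : r ≤ c) {P : ℕ} (hP : 1 ≤ P) :
    r ^ P ≤ c ^ (P - 1) * r := by
  obtain ⟨Q, rfl⟩ := Nat.exists_eq_add_of_le' hP
  rw [pow_succ, Nat.add_sub_cancel]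
  exact mul_le_mul_of_nonneg_right (pow_le_pow_left₀ hr hrc Q) hr

lemma sum_range_abs_two_mul_add_one_sub_add_two (m : ℕ) :
    ∑ i ∈ range (m + 2), |2 * (i : ℝ) + 1 - (m + 2 : ℕ)| =
      ∑ i ∈ range m, |2 * (i : ℝ) + 1 - m| + 2 * (m + 1) := by
  rw [sum_range_succ', sum_range_succ]
  push_cast
  have hm : (0 : ℝ) ≤ m := m.cast_nonneg
  have shift : ∀ i : ℕ, 2 * ((i : ℝ) + 1) + 1 - (m + 2) = 2 * i + 1 - m := fun i => by ring
  rw [abs_of_nonneg (by linarith : (0 : ℝ) ≤ 2 * ((m : ℝ) + 1) + 1 - (m + 2)),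
    abs_of_nonpos (by linarith : 2 * (0 : ℝ) + 1 - (m + 2) ≤ 0)]
  simp only [shift]
  ring

lemma two_mul_sum_range_abs_two_mul_add_one_sub_le (m : ℕ) :
    2 * ∑ i ∈ range m, |2 * (i : ℝ) + 1 - m| ≤ m ^ 2 := by
  induction m using Nat.twoStepInduction with
  | zero => simp
  | one => simp
  | more m ih _ =>
    rw [sum_range_abs_two_mul_add_one_sub_add_two]
    push_cast
    nlinarith

lemma six_mul_sum_range_abs_two_mul_add_one_sub_le (m : ℕ) :
    6 * ∑ i ∈ range m, |2 * (i : ℝ) + 1 - m| ≤ (2 * m - 1) * (3 * m - 2) := by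
  rcases Nat.lt_or_ge m 2 with hm | hm
  · interval_cases m <;> norm_num
  · have hm' : (2 : ℝ) ≤ m := by exact_mod_cast hm
    nlinarith [two_mul_sum_range_abs_two_mul_add_one_sub_le m]

/-- `m` plays the role of `2^(n-1)`, so `(3m-1)/2` is the expansion centre `l_n`. -/
noncomputable def multipoleRemainderTerm (x : ℝ) (m l P : ℕ) : ℝ :=
  ‖1 / ((x : ℂ) - (2 * (l : ℂ) - 1) * π * I)‖
    * ‖2 * ((l : ℂ) - (3 * m - 1) / 2) * π * I
        / ((x : ℂ) - (2 * ((3 * m - 1 : ℂ) / 2) - 1) * π * I)‖ ^ P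

lemma multipoleRemainderTerm_le (x : ℝ) {m l P : ℕ} (hml : m ≤ l) (hlm : l < 2 * m)
    (hP : 1 ≤ P) :
    multipoleRemainderTerm x m l P ≤
      (1 / 3) ^ (P - 1) * (|2 * (l : ℝ) + 1 - 3 * m| / ((2 * m - 1) * (3 * m - 2) * π)) := by
  have hm : (1 : ℝ) ≤ m := by exact_mod_cast (show 1 ≤ m by omega)
  have hml' : (m : ℝ) ≤ l := by exact_mod_cast hml
  have hlm' : (l : ℝ) + 1 ≤ 2 * m := by exact_mod_cast hlm
  have hπ := pi_pos
  have hpole_pos : 0 < (2 * (m : ℝ) - 1) * π := by nlinarith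
  have pole : ‖1 / ((x : ℂ) - (2 * (l : ℂ) - 1) * π * I)‖ ≤ 1 / ((2 * m - 1) * π) := by
    calc ‖1 / ((x : ℂ) - (2 * (l : ℂ) - 1) * π * I)‖
        = ‖1 / ((x : ℂ) - ((2 * (l : ℝ) - 1) * π : ℝ) * I)‖ := by push_cast; ring_nf
      _ ≤ 1 / ((2 * l - 1) * π) := norm_one_div_ofReal_sub_mul_I_le x (by nlinarith)
      _ ≤ 1 / ((2 * m - 1) * π) := by gcongr
  have ratio : ‖2 * ((l : ℂ) - (3 * m - 1) / 2) * π * I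
        / ((x : ℂ) - (2 * ((3 * m - 1 : ℂ) / 2) - 1) * π * I)‖
      ≤ |2 * (l : ℝ) + 1 - 3 * m| / (3 * m - 2) := by
    have hpos : 0 < (3 * (m : ℝ) - 2) * π := by nlinarith
    calc _ = ‖(((2 * l + 1 - 3 * m) * π : ℝ) : ℂ) * I
            / ((x : ℂ) - ((3 * (m : ℝ) - 2) * π : ℝ) * I)‖ := by push_cast; ring_nf
      _ ≤ |(2 * (l : ℝ) + 1 - 3 * m) * π| / ((3 * m - 2) * π) :=
        norm_mul_I_div_ofReal_sub_mul_I_le x _ hpos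
      _ = |2 * (l : ℝ) + 1 - 3 * m| / (3 * m - 2) := by
        rw [abs_mul, abs_of_pos hπ, mul_div_mul_right _ _ hπ.ne']
  have ratio_le_third : |2 * (l : ℝ) + 1 - 3 * m| / (3 * m - 2) ≤ 1 / 3 := by
    have hnum : |2 * (l : ℝ) + 1 - 3 * m| ≤ m - 1 := abs_le.mpr ⟨by linarith, by linarith⟩
    rw [div_le_div_iff₀ (by linarith) (by norm_num)]
    linarith
  calc multipoleRemainderTerm x m l P
      ≤ 1 / ((2 * m - 1) * π) *
          ((1 / 3) ^ (P - 1) * (|2 * (l : ℝ) + 1 - 3 * m| / (3 * m - 2))) :=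
        mul_le_mul pole
          ((pow_le_pow_pred_mul (norm_nonneg _) (ratio.trans ratio_le_third) hP).trans
            (mul_le_mul_of_nonneg_left ratio (by positivity)))
          (by positivity) (by positivity)
    _ = (1 / 3) ^ (P - 1) * (|2 * (l : ℝ) + 1 - 3 * m| / ((2 * m - 1) * (3 * m - 2) * π)) := by
        field_simp

lemma sum_multipoleRemainderTerm_le (x : ℝ) {m P : ℕ} (hm : 1 ≤ m) (hP : 1 ≤ P) :
    ∑ l ∈ Icc m (2 * m - 1), multipoleRemainderTerm x m l P ≤ 1 / (2 * π) * (1 / 3 ^ P) := by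
  have hm' : (1 : ℝ) ≤ m := by exact_mod_cast hm
  have hπ := pi_pos
  have hD : 0 < (2 * (m : ℝ) - 1) * (3 * m - 2) * π := by
    have : 0 < (2 * (m : ℝ) - 1) * (3 * m - 2) := by nlinarith
    positivity
  have hsum : ∑ l ∈ Icc m (2 * m - 1), |2 * (l : ℝ) + 1 - 3 * m| =
      ∑ i ∈ range m, |2 * (i : ℝ) + 1 - m| := by
    rw [Icc_sub_one_right_eq_Ico_of_not_isMin
      (by rw [isMin_iff_eq_bot, Nat.bot_eq_zero]; omega), sum_Ico_eq_sum_range,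
      show 2 * m - m = m by omega]
    refine sum_congr rfl fun i _ => ?_
    push_cast
    ring_nf
  calc ∑ l ∈ Icc m (2 * m - 1), multipoleRemainderTerm x m l P
      ≤ ∑ l ∈ Icc m (2 * m - 1),
          (1 / 3) ^ (P - 1) * (|2 * (l : ℝ) + 1 - 3 * m| / ((2 * m - 1) * (3 * m - 2) * π)) :=
        sum_le_sum fun l hl =>
          multipoleRemainderTerm_le x (mem_Icc.mp hl).1 (by have := (mem_Icc.mp hl).2; omega) hP
    _ = (1 / 3) ^ (P - 1) *
          ((∑ i ∈ range m, |2 * (i : ℝ) + 1 - m|) / ((2 * m - 1) * (3 * m - 2) * π)) := by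
        rw [← mul_sum, ← sum_div, hsum]
    _ ≤ (1 / 3) ^ (P - 1) * (1 / (6 * π)) := by
        refine mul_le_mul_of_nonneg_left ?_ (by positivity)
        rw [div_le_div_iff₀ hD (by positivity)]
        nlinarith [six_mul_sum_range_abs_two_mul_add_one_sub_le m]
    _ = 1 / (2 * π) * (1 / 3 ^ P) := by
        obtain ⟨Q, rfl⟩ := Nat.exists_eq_add_of_le' hP
        rw [Nat.add_sub_cancel, pow_succ, one_div_pow]
        field_simp
        ring

theorem multipole_remainder_bound (n P : ℕ) (hn : 1 ≤ n) (hP : 1 ≤ P) (x : ℝ) :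
    ∑ l ∈ Finset.Icc ((2:ℕ) ^ (n - 1)) (2 ^ n - 1),
        ‖(1 / ((x : ℂ) - (2 * (l : ℂ) - 1) * Real.pi * Complex.I))‖
          * ‖(2 * ((l : ℂ) - (3 * 2 ^ (n - 1) - 1) / 2) * Real.pi * Complex.I
              / ((x : ℂ) - (2 * ((3 * 2 ^ (n - 1) - 1 : ℂ) / 2) - 1) * Real.pi * Complex.I))‖ ^ P
      ≤ (1 / (2 * Real.pi)) * (1 / 3 ^ P) := by
  have hblock : 2 ^ n - 1 = 2 * 2 ^ (n - 1) - 1 := by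
    rw [← pow_succ', Nat.sub_add_cancel hn]
  have hcast : (2 : ℂ) ^ (n - 1) = ((2 ^ (n - 1) : ℕ) : ℂ) := by norm_cast
  rw [hblock, hcast]
  exact sum_multipoleRemainderTerm_le x Nat.one_le_two_pow hP
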